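/- arXiv:2006.07191 — 2 statements merged into one kernel-verified Lean document; each statement's English description precedes it below -/
import Mathlib

section
/- For each graded set b : B → ℕ, the functor − □ B on the category of graded sets has a right adjoint [B, −], so the monoidal category (GrdSet, □) is right closed. -/
/-- A graded set: a set together with an arity map to ℕ. -/
structure GS where
  carrier : Type
  ar : carrier → ℕ

/-- The composition tensor product of graded sets. -/
def GS.comp (X Y : GS) : GS where
  carrier := {p : X.carrier × List Y.carrier // p.2.length = X.ar p.1}
  ar := fun p => (p.val.2.map Y.ar).sum

/-- A morphism of graded sets: an arity-preserving function. -/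
structure GSHom (X Y : GS) where
  toFun : X.carrier → Y.carrier
  ar_eq : ∀ a, Y.ar (toFun a) = X.ar a

/-- Composition of morphisms of graded sets. -/
def GSHom.compHom {X Y Z : GS} (g : GSHom Y Z) (f : GSHom X Y) : GSHom X Z where
  toFun := g.toFun ∘ f.toFun
  ar_eq := fun a => (g.ar_eq _).trans (f.ar_eq a)

/-- The functor `− □ B` on morphisms: `f □ 1_B`. -/
def GSHom.sqRight {X Y : GS} (B : GS) (f : GSHom X Y) :
    GSHom (X.comp B) (Y.comp B) where
  toFun := fun p => ⟨(f.toFun p.val.1, p.val.2), by rw [f.ar_eq]; exact p.property⟩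
  ar_eq := fun _ => rfl

theorem GSHom.ext' {X Y : GS} {f g : GSHom X Y} (h : f.toFun = g.toFun) : f = g := by
  cases f; cases g; cases h; rfl

/-- The internal hom `[B, C]`. -/
def GS.ihom (B C : GS) : GS where
  carrier := Σ n : ℕ, {f : {ψ : List B.carrier // ψ.length = n} → C.carrier //
      ∀ ψ, C.ar (f ψ) = (ψ.val.map B.ar).sum}
  ar := fun p => p.1

def GS.ihomMap (B : GS) {C C' : GS} (g : GSHom C C') : GSHom (GS.ihom B C) (GS.ihom B C') where
  toFun := fun p => ⟨p.1, fun ψ => g.toFun (p.2.val ψ),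
    fun ψ => (g.ar_eq _).trans (p.2.property ψ)⟩
  ar_eq := fun _ => rfl

def GS.curry (A B C : GS) (h : GSHom (A.comp B) C) : GSHom A (GS.ihom B C) where
  toFun := fun x => ⟨A.ar x, fun ψ => h.toFun ⟨(x, ψ.val), ψ.property⟩,
    fun ψ => h.ar_eq _⟩
  ar_eq := fun _ => rfl

def GS.uncurry (A B C : GS) (g : GSHom A (GS.ihom B C)) : GSHom (A.comp B) C where
  toFun := fun p => (g.toFun p.val.1).2.val
      ⟨p.val.2, p.property.trans (g.ar_eq p.val.1).symm⟩
  ar_eq := fun p => (g.toFun p.val.1).2.property _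

theorem ihom_eta (B C : GS) (p : (GS.ihom B C).carrier) (m : ℕ) (hm : p.1 = m) :
    p = ⟨m, fun ψ => p.2.val ⟨ψ.val, ψ.property.trans hm.symm⟩,
      fun ψ => p.2.property _⟩ := by
  obtain ⟨n, f, hf⟩ := p
  subst hm
  rfl

/-- for each graded set `B`, the functor `− □ B` on graded sets has
a right adjoint `[B, −]`: there are bijections `Hom(A □ B, C) ≅ Hom(A, [B, C])`
natural in `A` and `C`, so `(GrdSet, □)` is right closed. -/
theorem comp_tensor_right_closed (B : GS) :
    ∃ (H : GS → GS) (Hmap : ∀ (C C' : GS), GSHom C C' → GSHom (H C) (H C'))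
      (Φ : ∀ (A C : GS), GSHom (A.comp B) C ≃ GSHom A (H C)),
      (∀ (A A' C : GS) (f : GSHom A' A) (h : GSHom (A.comp B) C),
          Φ A' C (h.compHom (GSHom.sqRight B f)) = ((Φ A C) h).compHom f) ∧
      (∀ (A C C' : GS) (g : GSHom C C') (h : GSHom (A.comp B) C),
          Φ A C' (g.compHom h) = (Hmap C C' g).compHom ((Φ A C) h)) := by
  refine ⟨GS.ihom B, fun C C' g => GS.ihomMap B g,
    fun A C => ⟨GS.curry A B C, GS.uncurry A B C, ?_, ?_⟩, ?_, ?_⟩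
  · intro h
    apply GSHom.ext'
    funext p
    rfl
  · intro g
    apply GSHom.ext'
    funext x
    exact (ihom_eta B C (g.toFun x) (A.ar x) (g.ar_eq x)).symm
  · intro A A' C f h
    apply GSHom.ext'
    funext x
    exact (ihom_eta B C ((GS.curry A B C h).toFun (f.toFun x)) (A'.ar x) (f.ar_eq x)).symm
  · intro A C C' g h
    apply GSHom.ext'
    funext x
    rfl
end

section
/- Let T be a monad on a category C arising from an adjunction F ⊣ U with T = UF, and let A be a T-algebra. Then the induced functor Ū : (T-Alg)/A → C/U(A) between slice categories is monadic: it has a left adjoint F̄ sending (x : X → U A) to the composite ε_A ∘ F(x) : F X → A, and the comparison functor to the Eilenberg–Moore category of the induced monad is an equivalence. -/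
open CategoryTheory

namespace SliceMonadicAux

universe v u

variable {C : Type u} [Category.{v} C] (T : Monad C) (A : T.Algebra)

/-- The left adjoint `F̄ : C/U(A) ⥤ (T-Alg)/A`, sending `x : X ⟶ U A` to
`ε_A ∘ F(x)`. -/
@[simps]
def Fb : Over (T.forget.obj A) ⥤ Over A where
  obj X := Over.mk (T.free.map X.hom ≫ T.adj.counit.app A)
  map {X Y} f := Over.homMk (T.free.map f.left) (by
    dsimp
    rw [← Functor.map_comp_assoc, Over.w])

/-- Forward direction of the hom-equivalence. -/
def homEquivFun (X : Over (T.forget.obj A)) (M : Over A)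
    (g : (Fb T A).obj X ⟶ M) : X ⟶ (Over.post (X := A) T.forget).obj M :=
  Over.homMk (T.η.app X.left ≫ g.left.f) (by
    have hw : g.left.f ≫ M.hom.f = T.toFunctor.map X.hom ≫ (T.adj.counit.app A).f :=
      congrArg Monad.Algebra.Hom.f (Over.w g)
    dsimp at hw
    erw [Category.assoc, hw, ← T.η.naturality_assoc]
    simp [A.unit]
    erw [A.unit]
    exact Category.comp_id _)

/-- Backward direction of the hom-equivalence. -/
def homEquivInv (X : Over (T.forget.obj A)) (M : Over A)
    (f : X ⟶ (Over.post (X := A) T.forget).obj M) : (Fb T A).obj X ⟶ M :=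
  Over.homMk (U := (Fb T A).obj X) (V := M)
    (⟨T.toFunctor.map f.left ≫ M.left.a, by
        change T.map (T.map f.left ≫ M.left.a) ≫ M.left.a = T.μ.app X.left ≫ T.map f.left ≫ M.left.a
        erw [Functor.map_comp, Category.assoc, ← M.left.assoc, ← T.μ.naturality_assoc]
        rfl⟩ :
      ((Fb T A).obj X).left ⟶ M.left)
    (by
      have hw : f.left ≫ M.hom.f = X.hom := Over.w f
      apply Monad.Algebra.Hom.ext
      have hmh : T.toFunctor.map M.hom.f ≫ A.a = M.left.a ≫ M.hom.f := M.hom.h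
      change (T.map f.left ≫ M.left.a) ≫ M.hom.f = ((Fb T A).obj X).hom.f
      erw [Category.assoc, ← hmh, ← Functor.map_comp_assoc, hw]
      change _ = T.map X.hom ≫ (T.map (𝟙 A.A) ≫ A.a)
      erw [T.map_id, Category.id_comp]
      rfl)

@[simp] lemma homEquivFun_left (X : Over (T.forget.obj A)) (M : Over A)
    (g : (Fb T A).obj X ⟶ M) :
    (homEquivFun T A X M g).left = T.η.app X.left ≫ g.left.f := rfl

@[simp] lemma homEquivInv_left_f (X : Over (T.forget.obj A)) (M : Over A)
    (f : X ⟶ (Over.post (X := A) T.forget).obj M) :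
    (homEquivInv T A X M f).left.f = T.toFunctor.map f.left ≫ M.left.a := rfl

/-- The adjunction `F̄ ⊣ Ū`. -/
def adjb : Fb T A ⊣ Over.post (X := A) T.forget :=
  Adjunction.mkOfHomEquiv
    { homEquiv := fun X M =>
        { toFun := homEquivFun T A X M
          invFun := homEquivInv T A X M
          left_inv := fun g => by
            ext
            simp
            erw [Functor.map_comp, Category.assoc, g.left.h, ← Category.assoc, T.right_unit,
              Category.id_comp]
          right_inv := fun f => by
            ext
            simp only [homEquivFun_left, homEquivInv_left_f]
            erw [← T.η.naturality_assoc]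
            erw [M.left.unit, Category.comp_id]
            rfl
          }
      homEquiv_naturality_left_symm := fun {X Y M} f g => by
        ext
        simp
        change _ = T.map f.left ≫ T.map g.left ≫ M.left.a
        exact Category.assoc _ _ _
      homEquiv_naturality_right := fun {X M N} g h => by
        ext
        simp
        exact (Category.assoc _ _ _).symm }

lemma adjb_unit_app (X : Over (T.forget.obj A)) :
    (adjb T A).unit.app X = homEquivFun T A X ((Fb T A).obj X) (𝟙 _) := by
  simp [adjb, Adjunction.mkOfHomEquiv]

lemma adjb_counit_app (M : Over A) :
    (adjb T A).counit.app M =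
      homEquivInv T A ((Over.post (X := A) T.forget).obj M) M (𝟙 _) := by
  simp [adjb, Adjunction.mkOfHomEquiv]

instance : (Monad.comparison (adjb T A)).Faithful := by
  infer_instance

instance comparisonFull : (Monad.comparison (adjb T A)).Full where
  map_surjective {M N} g := by
    -- the underlying morphism of `g` is an algebra map
    have hh : T.toFunctor.map g.f.left ≫ N.left.a = M.left.a ≫ g.f.left := by
      have := congrArg CommaMorphism.left g.h
      dsimp [adjb_counit_app] at this
      simp [adjb_counit_app] at this
      change T.map g.f.left ≫ (𝟙 _ ≫ N.left.a) = (𝟙 _ ≫ M.left.a) ≫ g.f.left at this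
      erw [Category.id_comp, Category.id_comp] at this
      exact this
    have hw : g.f.left ≫ T.forget.map N.hom = T.forget.map M.hom := Over.w g.f
    refine ⟨Over.homMk (⟨g.f.left, hh⟩ : M.left ⟶ N.left) (by ext; exact hw), ?_⟩
    ext : 2
    · rfl

instance comparisonEssSurj : (Monad.comparison (adjb T A)).EssSurj where
  mem_essImage X := by
    -- unpack the algebra structure
    have hunit : T.η.app X.A.left ≫ X.a.left = 𝟙 X.A.left := by
      have := congrArg CommaMorphism.left X.unit
      simp [adjb_unit_app] at this
      change (T.η.app X.A.left ≫ 𝟙 _) ≫ X.a.left = 𝟙 X.A.left at this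
      simpa using this
    have hassoc : T.μ.app X.A.left ≫ X.a.left =
        T.toFunctor.map X.a.left ≫ X.a.left := by
      have := congrArg CommaMorphism.left X.assoc
      simp [adjb_counit_app] at this
      change (𝟙 _ ≫ T.μ.app X.A.left) ≫ X.a.left = T.map X.a.left ≫ X.a.left at this
      simpa using this
    -- the underlying object carries a `T`-algebra structure
    let M : T.Algebra := ⟨X.A.left, X.a.left, hunit, hassoc⟩
    have hm : T.toFunctor.map X.A.hom ≫ A.a = M.a ≫ X.A.hom := by
      have := Over.w X.a
      change X.a.left ≫ X.A.hom = T.map X.A.hom ≫ (T.map (𝟙 _) ≫ A.a) at this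
      erw [T.map_id, Category.id_comp] at this
      set_option linter.unnecessarySimpa false in
      exact this.symm
    let m : M ⟶ A := ⟨X.A.hom, hm⟩
    refine ⟨Over.mk m, ⟨Monad.Algebra.isoMk (Over.isoMk (Iso.refl _) (by exact Category.id_comp _)) ?_⟩⟩
    ext
    dsimp [adjb_counit_app, m, M]
    simp [adjb_counit_app]
    change T.map (𝟙 X.A.left) ≫ X.a.left = (𝟙 _ ≫ X.a.left) ≫ 𝟙 X.A.left
    simp
    exact Category.id_comp _

end SliceMonadicAux

open SliceMonadicAux in
/-- let `T` be a monad on `C` arising from the (free/forgetful)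
adjunction `F ⊣ U` with `T = U F`, and let `A` be a `T`-algebra.  The induced
functor `Ū : (T-Alg)/A → C/U(A)` between slice categories is monadic: it has a
left adjoint `F̄` sending `x : X → U A` to `ε_A ∘ F(x) : F X → A`, and the
comparison functor to the Eilenberg–Moore category of the induced monad is an
equivalence. -/
theorem slice_of_algebras_monadic {C : Type u} [Category.{v} C]
    (T : Monad C) (A : T.Algebra) :
    (∃ (Fb : Over (T.forget.obj A) ⥤ Over A)
        (_ : Fb ⊣ Over.post (X := A) T.forget),
        ∀ X : Over (T.forget.obj A),
          Fb.obj X = Over.mk (T.free.map X.hom ≫ T.adj.counit.app A)) ∧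
    Nonempty (MonadicRightAdjoint (Over.post (X := A) T.forget)) := by
  exact ⟨⟨Fb T A, adjb T A, fun X => rfl⟩,
    ⟨{ L := Fb T A, adj := adjb T A, eqv := {} }⟩⟩
end
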